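/- Let ω = (ω₁, ω₂) ∈ ℝ² with ω ≠ 0, set ω⊥ = (ω₂, −ω₁), and let s₂ > 1/2 and s₁ > 3s₂/(2s₂ − 1). Then there exists a constant C = C(ω, s₁, s₂) such that for every trigonometric polynomial f on 𝕋² with coefficients f̂ : ℤ² → ℂ and every x ∈ ℝ²: |Σ_{n∈ℤ²} 2πi(ω·n) f̂(n) e^{2πi n·x}| ≤ C·[ (Σ_{n∈ℤ²} (1+(ω·n)²)^{s₁} |f̂(n)|²)^{1/2} + (Σ_{n∈ℤ²} (1+(ω⊥·n)²)^{s₂} |f̂(n)|²)^{1/2} ]. -/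

import Mathlib

/-!
By the triangle inequality `|∂ₓf(x)| ≤ ∑ 2π|ω·n||f̂(n)|`, and Cauchy–Schwarz with the weight
`w(n) = (1 + (ω·n)²)^s₁ + (1 + (ω⊥·n)²)^s₂` bounds this by `(∑ (2πω·n)²/w(n))^(1/2)` times the
anisotropic Sobolev norm, so it remains to show `∑ (ω·n)²/w(n) < ∞`. Writing `A = 1 + (ω·n)²`,
`B = 1 + (ω⊥·n)²`, weighted AM–GM gives `w ≥ A^(θs₁) B^((1-θ)s₂)`, so the terms are at most
`A^(-(θs₁-1)) B^(-(1-θ)s₂)`; the hypothesis `s₁ > 3s₂/(2s₂-1)` is exactly what allows a `θ` making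
both exponents exceed `1/2`. As `n ↦ (ω·n, ω⊥·n)` is invertible, the sum of such a product over
`ℤ²` is dominated by the product of the one-dimensional sums `∑ⱼ (1 + j²)^(-α)`, `α > 1/2`.
-/

open Finset
open scoped Real

lemma summable_one_add_sq_rpow_neg {α : ℝ} (hα : 1 / 2 < α) :
    Summable fun j : ℤ => (1 + (j : ℝ) ^ 2) ^ (-α) := by
  refine (Real.summable_abs_int_rpow (by linarith : 1 < 2 * α)).of_norm_bounded_eventually ?_
  filter_upwards [Filter.eventually_cofinite_ne 0] with j hj
  have hj₂ : (0 : ℝ) < (j : ℝ) ^ 2 := by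
    have : (j : ℝ) ≠ 0 := mod_cast hj
    positivity
  rw [Real.norm_of_nonneg (by positivity)]
  calc (1 + (j : ℝ) ^ 2) ^ (-α) ≤ ((j : ℝ) ^ 2) ^ (-α) :=
        Real.rpow_le_rpow_of_nonpos hj₂ (by linarith) (by linarith)
    _ = |(j : ℝ)| ^ (-(2 * α)) := by
        rw [← sq_abs, ← Real.rpow_natCast, ← Real.rpow_mul (abs_nonneg _)]
        push_cast
        ring_nf

lemma one_add_sq_rpow_neg_le_floor {α : ℝ} (hα : 0 ≤ α) (x : ℝ) :
    (1 + x ^ 2) ^ (-α) ≤ 4 ^ α * (1 + (⌊x⌋ : ℝ) ^ 2) ^ (-α) := by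
  have hcell : 1 + (⌊x⌋ : ℝ) ^ 2 ≤ 4 * (1 + x ^ 2) := by
    nlinarith [Int.floor_le x, Int.lt_floor_add_one x, sq_nonneg ((⌊x⌋ : ℝ) - 2 * x)]
  calc (1 + x ^ 2) ^ (-α) ≤ ((1 + (⌊x⌋ : ℝ) ^ 2) / 4) ^ (-α) :=
        Real.rpow_le_rpow_of_nonpos (by positivity) (by linarith) (by linarith)
    _ = 4 ^ α * (1 + (⌊x⌋ : ℝ) ^ 2) ^ (-α) := by
        rw [Real.div_rpow (by positivity) (by norm_num), Real.rpow_neg (by norm_num : (0 : ℝ) ≤ 4),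
          div_inv_eq_mul, mul_comm]

lemma card_le_card_of_forall_sub_mem {ι : Type*} [AddGroup ι] {t K : Finset ι}
    (h : ∀ i ∈ t, ∀ j ∈ t, i - j ∈ K) : #t ≤ #K := by
  rcases t.eq_empty_or_nonempty with rfl | ⟨j, hj⟩
  · simp
  exact card_le_card_of_injOn (· - j) (fun i hi => h i hi j hj)
    fun _ _ _ _ hi => sub_left_injective hi

lemma Summable.comp_of_sub_mem {ι κ : Type*} [AddGroup ι] {g : κ → ℝ} (hg : Summable g)
    (hg₀ : ∀ y, 0 ≤ g y) {φ : ι → κ} (K : Finset ι) (hφ : ∀ i j, φ i = φ j → i - j ∈ K) :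
    Summable (g ∘ φ) := by
  classical
  refine summable_of_sum_le (c := #K * ∑' y, g y) (fun i => hg₀ _) fun t => ?_
  calc ∑ i ∈ t, g (φ i) = ∑ y ∈ t.image φ, #{i ∈ t | φ i = y} • g y := sum_comp g φ
    _ ≤ ∑ y ∈ t.image φ, #K * g y := by
        refine sum_le_sum fun y _ => ?_
        rw [nsmul_eq_mul]
        refine mul_le_mul_of_nonneg_right ?_ (hg₀ y)
        exact_mod_cast card_le_card_of_forall_sub_mem fun i hi j hj =>
          hφ i j (by rw [(mem_filter.1 hi).2, (mem_filter.1 hj).2])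
    _ = #K * ∑ y ∈ t.image φ, g y := (mul_sum ..).symm
    _ ≤ #K * ∑' y, g y := by
        gcongr
        exact hg.sum_le_tsum _ fun y _ => hg₀ y

lemma abs_le_of_abs_lt_one_of_det_ne_zero {a b c d x y : ℝ} (hdet : a * d - b * c ≠ 0)
    (hu : |a * x + b * y| < 1) (hv : |c * x + d * y| < 1) :
    |x| ≤ (|a| + |b| + |c| + |d|) / |a * d - b * c| ∧
      |y| ≤ (|a| + |b| + |c| + |d|) / |a * d - b * c| := by
  have hD : 0 < |a * d - b * c| := abs_pos.2 hdet
  have hcomb : ∀ p q r s : ℝ, |r| < 1 → |s| < 1 → |p * r - q * s| ≤ |p| + |q| := by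
    intro p q r s hr hs
    calc |p * r - q * s| ≤ |p| * |r| + |q| * |s| := by
          rw [← abs_mul, ← abs_mul]; exact abs_sub _ _
      _ ≤ |p| + |q| := by nlinarith [abs_nonneg p, abs_nonneg q]
  constructor
  · rw [le_div_iff₀ hD, ← abs_mul,
      show x * (a * d - b * c) = d * (a * x + b * y) - b * (c * x + d * y) by ring]
    linarith [hcomb d b _ _ hu hv, abs_nonneg a, abs_nonneg c]
  · rw [le_div_iff₀ hD, ← abs_mul,
      show y * (a * d - b * c) = a * (c * x + d * y) - c * (a * x + b * y) by ring]
    linarith [hcomb a c _ _ hv hu, abs_nonneg b, abs_nonneg d]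

/-- Passing to the unit cell `(⌊u n⌋, ⌊v n⌋)` of `(u n, v n)` reduces the sum to a product of two
one-dimensional ones; the cells have boundedly many preimages because `(u, v)` is invertible. -/
theorem summable_one_add_sq_rpow_neg_mul_of_det_ne_zero {a b c d α β : ℝ}
    (hdet : a * d - b * c ≠ 0) (hα : 1 / 2 < α) (hβ : 1 / 2 < β) :
    Summable fun n : ℤ × ℤ =>
      (1 + (a * n.1 + b * n.2) ^ 2) ^ (-α) * (1 + (c * n.1 + d * n.2) ^ 2) ^ (-β) := by
  set g : ℤ × ℤ → ℝ := fun p => (1 + (p.1 : ℝ) ^ 2) ^ (-α) * (1 + (p.2 : ℝ) ^ 2) ^ (-β)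
  have hg : Summable g :=
    (summable_one_add_sq_rpow_neg hα).mul_of_nonneg (summable_one_add_sq_rpow_neg hβ)
      (fun _ => by positivity) fun _ => by positivity
  set R := ⌈(|a| + |b| + |c| + |d|) / |a * d - b * c|⌉
  have hmem : ∀ k : ℤ, |(k : ℝ)| ≤ (|a| + |b| + |c| + |d|) / |a * d - b * c| →
      k ∈ Icc (-R) R := fun k hk => by
    rw [mem_Icc, ← abs_le]
    exact_mod_cast hk.trans (Int.le_ceil _)
  have hcells : Summable (g ∘ fun n : ℤ × ℤ => (⌊a * n.1 + b * n.2⌋, ⌊c * n.1 + d * n.2⌋)) := by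
    refine hg.comp_of_sub_mem (fun _ => by positivity) (Icc (-R) R ×ˢ Icc (-R) R)
      fun n m h => ?_
    obtain ⟨hu, hv⟩ := Prod.mk.inj h
    have hsep := abs_le_of_abs_lt_one_of_det_ne_zero hdet (x := ((n.1 - m.1 : ℤ) : ℝ))
      (y := ((n.2 - m.2 : ℤ) : ℝ))
      ((congrArg abs (by push_cast; ring)).trans_lt (Int.abs_sub_lt_one_of_floor_eq_floor hu))
      ((congrArg abs (by push_cast; ring)).trans_lt (Int.abs_sub_lt_one_of_floor_eq_floor hv))
    exact mem_product.2 ⟨hmem _ hsep.1, hmem _ hsep.2⟩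
  refine (hcells.mul_left (4 ^ α * 4 ^ β)).of_nonneg_of_le (fun _ => by positivity) fun n => ?_
  calc (1 + (a * n.1 + b * n.2) ^ 2) ^ (-α) * (1 + (c * n.1 + d * n.2) ^ 2) ^ (-β)
      ≤ (4 ^ α * (1 + (⌊a * n.1 + b * n.2⌋ : ℝ) ^ 2) ^ (-α)) *
          (4 ^ β * (1 + (⌊c * n.1 + d * n.2⌋ : ℝ) ^ 2) ^ (-β)) :=
        mul_le_mul (one_add_sq_rpow_neg_le_floor (by linarith) _)
          (one_add_sq_rpow_neg_le_floor (by linarith) _) (by positivity) (by positivity)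
    _ = _ := by simp only [g, Function.comp_apply]; ring

lemma rpow_mul_rpow_le_add {A B p q θ : ℝ} (hA : 0 ≤ A) (hB : 0 ≤ B) (hθ₀ : 0 ≤ θ)
    (hθ₁ : θ ≤ 1) : A ^ (θ * p) * B ^ ((1 - θ) * q) ≤ A ^ p + B ^ q := by
  have hAp := Real.rpow_nonneg hA p
  have hBq := Real.rpow_nonneg hB q
  calc A ^ (θ * p) * B ^ ((1 - θ) * q) = (A ^ p) ^ θ * (B ^ q) ^ (1 - θ) := by
        rw [← Real.rpow_mul hA, ← Real.rpow_mul hB, mul_comm p, mul_comm q]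
    _ ≤ θ * A ^ p + (1 - θ) * B ^ q :=
        Real.geom_mean_le_arith_mean2_weighted hθ₀ (by linarith) hAp hBq (by ring)
    _ ≤ A ^ p + B ^ q := by nlinarith

lemma sq_div_rpow_add_rpow_le {p q θ : ℝ} (hθ₀ : 0 ≤ θ) (hθ₁ : θ ≤ 1) (U V : ℝ) :
    U ^ 2 / ((1 + U ^ 2) ^ p + (1 + V ^ 2) ^ q) ≤
      (1 + U ^ 2) ^ (-(θ * p - 1)) * (1 + V ^ 2) ^ (-((1 - θ) * q)) := by
  have hA : 0 < 1 + U ^ 2 := by positivity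
  have hB : 0 < 1 + V ^ 2 := by positivity
  calc U ^ 2 / ((1 + U ^ 2) ^ p + (1 + V ^ 2) ^ q)
      ≤ (1 + U ^ 2) / ((1 + U ^ 2) ^ (θ * p) * (1 + V ^ 2) ^ ((1 - θ) * q)) :=
        div_le_div₀ hA.le (by linarith) (by positivity) (rpow_mul_rpow_le_add hA.le hB.le hθ₀ hθ₁)
    _ = _ := by
        rw [neg_sub, Real.rpow_sub hA, Real.rpow_one, Real.rpow_neg hB.le]
        ring

lemma exists_interpolation_exponent {s₁ s₂ : ℝ} (hs₂ : 1 / 2 < s₂)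
    (hs₁ : 3 * s₂ / (2 * s₂ - 1) < s₁) :
    ∃ θ : ℝ, 0 ≤ θ ∧ θ ≤ 1 ∧ 1 / 2 < θ * s₁ - 1 ∧ 1 / 2 < (1 - θ) * s₂ := by
  have h2s₂ : 0 < 2 * s₂ - 1 := by linarith
  have hkey : 3 * s₂ < s₁ * (2 * s₂ - 1) := (div_lt_iff₀ h2s₂).1 hs₁
  have hs₁₀ : 0 < s₁ := by nlinarith
  refine ⟨(3 / (2 * s₁) + 1 - 1 / (2 * s₂)) / 2, ?_, ?_, ?_, ?_⟩
  all_goals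
    field_simp
    nlinarith

lemma summable_sq_div_anisotropic_weight {ω : ℝ × ℝ} (hω : ω ≠ 0) {s₁ s₂ : ℝ}
    (hs₂ : 1 / 2 < s₂) (hs₁ : 3 * s₂ / (2 * s₂ - 1) < s₁) :
    Summable fun n : ℤ × ℤ => (ω.1 * n.1 + ω.2 * n.2) ^ 2 /
      ((1 + (ω.1 * n.1 + ω.2 * n.2) ^ 2) ^ s₁ + (1 + (ω.2 * n.1 - ω.1 * n.2) ^ 2) ^ s₂) := by
  obtain ⟨θ, hθ₀, hθ₁, hα, hβ⟩ := exists_interpolation_exponent hs₂ hs₁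
  have hdet : ω.1 * -ω.1 - ω.2 * ω.2 ≠ 0 := fun h =>
    hω (Prod.ext_iff.2 (mul_self_add_mul_self_eq_zero.1 (by linarith)))
  have hprod := summable_one_add_sq_rpow_neg_mul_of_det_ne_zero hdet hα hβ
  simp only [neg_mul, ← sub_eq_add_neg] at hprod
  exact hprod.of_nonneg_of_le (fun _ => by positivity) fun _ => sq_div_rpow_add_rpow_le hθ₀ hθ₁ _ _

lemma tsum_mul_le_weighted_cauchy_schwarz {ι : Type*} {a b w : ι → ℝ} (ha : ∀ i, 0 ≤ a i)
    (hb : ∀ i, 0 ≤ b i) (hw : ∀ i, 0 < w i) (ha' : Summable fun i => a i ^ 2 / w i)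
    (hb' : Summable fun i => w i * b i ^ 2) :
    ∑' i, a i * b i ≤
      (∑' i, a i ^ 2 / w i) ^ ((1 : ℝ) / 2) * (∑' i, w i * b i ^ 2) ^ ((1 : ℝ) / 2) := by
  have hsq : ∀ i, (a i / √(w i)) ^ 2 = a i ^ 2 / w i ∧ (√(w i) * b i) ^ 2 = w i * b i ^ 2 :=
    fun i => ⟨by rw [div_pow, Real.sq_sqrt (hw i).le], by rw [mul_pow, Real.sq_sqrt (hw i).le]⟩
  have hCS := Real.inner_le_Lp_mul_Lq_tsum_of_nonneg .two_two
    (f := fun i => a i / √(w i)) (g := fun i => √(w i) * b i)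
    (fun i => by positivity [ha i]) (fun i => by positivity [hb i])
    (by simpa only [Real.rpow_two, (hsq _).1] using ha')
    (by simpa only [Real.rpow_two, (hsq _).2] using hb')
  simp only [Real.rpow_two, (hsq _).1, (hsq _).2] at hCS
  refine (tsum_congr fun i => ?_).trans_le hCS
  field_simp [(Real.sqrt_pos.2 (hw i)).ne']

lemma norm_tsum_mul_mul_le {ι : Type*} {m c e : ι → ℂ} {w₁ w₂ : ι → ℝ}
    (hc : (Function.support c).Finite) (he : ∀ i, ‖e i‖ ≤ 1) (hw₁ : ∀ i, 0 < w₁ i)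
    (hw₂ : ∀ i, 0 ≤ w₂ i) (hm : Summable fun i => ‖m i‖ ^ 2 / (w₁ i + w₂ i)) :
    ‖∑' i, m i * c i * e i‖ ≤ (∑' i, ‖m i‖ ^ 2 / (w₁ i + w₂ i)) ^ ((1 : ℝ) / 2) *
      ((∑' i, w₁ i * ‖c i‖ ^ 2) ^ ((1 : ℝ) / 2) + (∑' i, w₂ i * ‖c i‖ ^ 2) ^ ((1 : ℝ) / 2)) := by
  have hw : ∀ i, 0 < w₁ i + w₂ i := fun i => add_pos_of_pos_of_nonneg (hw₁ i) (hw₂ i)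
  have hsum : ∀ f : ι → ℝ, (∀ i, c i = 0 → f i = 0) → Summable f := fun f hf =>
    summable_of_hasFiniteSupport (hc.subset fun i hi hci => hi (hf i hci))
  have hsum₁ := hsum (fun i => w₁ i * ‖c i‖ ^ 2) fun i h => by simp [h]
  have hsum₂ := hsum (fun i => w₂ i * ‖c i‖ ^ 2) fun i h => by simp [h]
  calc ‖∑' i, m i * c i * e i‖ ≤ ∑' i, ‖m i * c i * e i‖ :=
        norm_tsum_le_tsum_norm (hsum _ fun i h => by simp [h])
    _ ≤ ∑' i, ‖m i‖ * ‖c i‖ := by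
        refine Summable.tsum_le_tsum (fun i => ?_) (hsum _ fun i h => by simp [h])
          (hsum _ fun i h => by simp [h])
        rw [norm_mul, norm_mul]
        exact mul_le_of_le_one_right (by positivity) (he i)
    _ ≤ (∑' i, ‖m i‖ ^ 2 / (w₁ i + w₂ i)) ^ ((1 : ℝ) / 2) *
          (∑' i, (w₁ i + w₂ i) * ‖c i‖ ^ 2) ^ ((1 : ℝ) / 2) :=
        tsum_mul_le_weighted_cauchy_schwarz (fun _ => norm_nonneg _) (fun _ => norm_nonneg _)
          hw hm (by simpa only [add_mul] using hsum₁.add hsum₂)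
    _ ≤ _ := by
        simp only [add_mul]
        rw [hsum₁.tsum_add hsum₂]
        refine mul_le_mul_of_nonneg_left (Real.rpow_add_le_add_rpow ?_ ?_ (by norm_num)
          (by norm_num)) (Real.rpow_nonneg (tsum_nonneg fun i => by positivity [hw i]) _)
        · exact tsum_nonneg fun i => by positivity [(hw₁ i).le]
        · exact tsum_nonneg fun i => by positivity [hw₂ i]

/-- the crucial estimate `‖∂_x f‖_{L^∞} ≲ ‖f‖_{H^{s₁,s₂}_ω}` for
trigonometric polynomials, where `∂_x f(x) = Σ_n 2πi(ω·n) f̂(n) e^{2πi n·x}` is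
the tangential derivative along `ω`, `ω⊥ = (ω₂, −ω₁)`, `s₂ > 1/2`,
`s₁ > 3s₂/(2s₂−1)`. -/
theorem stmt_4 (ω : ℝ × ℝ) (hω : ω ≠ 0) (s₁ s₂ : ℝ)
    (hs₂ : 1 / 2 < s₂) (hs₁ : 3 * s₂ / (2 * s₂ - 1) < s₁) :
    ∃ C : ℝ, ∀ c : ℤ × ℤ → ℂ, (Function.support c).Finite → ∀ x : ℝ × ℝ,
      ‖∑' n : ℤ × ℤ,
          2 * Real.pi * Complex.I * ((ω.1 * (n.1 : ℝ) + ω.2 * (n.2 : ℝ) : ℝ) : ℂ) * c n *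
            Complex.exp (2 * Real.pi * Complex.I *
              (((n.1 : ℝ) * x.1 + (n.2 : ℝ) * x.2 : ℝ) : ℂ))‖ ≤ C *
        ((∑' n : ℤ × ℤ,
            (1 + (ω.1 * (n.1 : ℝ) + ω.2 * (n.2 : ℝ)) ^ 2) ^ s₁ * ‖c n‖ ^ 2) ^ ((1 : ℝ) / 2) +
         (∑' n : ℤ × ℤ,
            (1 + (ω.2 * (n.1 : ℝ) - ω.1 * (n.2 : ℝ)) ^ 2) ^ s₂ * ‖c n‖ ^ 2) ^ ((1 : ℝ) / 2)) := by
  have hm := (summable_sq_div_anisotropic_weight hω hs₂ hs₁).mul_left ((2 * π) ^ 2)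
  refine ⟨_, fun c hc x => norm_tsum_mul_mul_le hc (fun n => ?_) (fun n => by positivity)
    (fun n => by positivity) (hm.congr fun n => ?_)⟩
  · rw [Complex.norm_exp]
    simp
  · simp only [norm_mul, Complex.norm_real, Complex.norm_I, Real.norm_eq_abs, Complex.norm_two,
      abs_of_pos Real.pi_pos, mul_one, mul_pow, sq_abs]
    ring
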